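/- arXiv:2412.01802 — 2 statements merged into one kernel-verified Lean document; each statement's English description precedes it below -/
import Mathlib

section
/- Let p, q be primes with p ≡ 1 (mod q), and let G = ⟨a, b | aᵖ = bᵠ = 1, b a b⁻¹ = aʳ⟩ where r has multiplicative order q modulo p. Then for every integer n with 1 ≤ n ≤ q−1, the set C = {aʲ bⁿ : 0 ≤ j ≤ p−1} is a conjugacy class in G of size p. -/
/-! Conjugation by `b` raises `a` to the `r`-th power, so `a^k bⁿ a⁻ᵏ = a^(k(1 - rⁿ)) bⁿ`.
As `rⁿ ≢ 1 (mod p)`, the factor `1 - rⁿ` is invertible mod `p` and these conjugates exhaust the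
coset `⟨a⟩ bⁿ`. Conversely this coset is stable under conjugation by `a` and by `b`, hence, `G`
being finite and generated by `a` and `b`, under conjugation by every element. -/

section

variable {G : Type*} [Group G]

theorem mem_of_isConj_of_generators_conj_mem [Finite G] {s T : Set G}
    (hs : Subgroup.closure s = ⊤) (hT : ∀ g ∈ s, ∀ t ∈ T, g * t * g⁻¹ ∈ T)
    {x y : G} (hx : x ∈ T) (hxy : IsConj x y) : y ∈ T := by
  rw [isConj_iff] at hxy
  obtain ⟨g, rfl⟩ := hxy
  have hg : g ∈ Submonoid.closure s := by
    rw [← Subgroup.closure_toSubmonoid_of_finite, hs]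
    exact Subgroup.mem_top g
  induction hg using Submonoid.closure_induction generalizing x with
  | mem g hg => exact hT g hg x hx
  | one => simpa using hx
  | mul g h _ _ ihg ihh =>
    rw [show g * h * x * (g * h)⁻¹ = g * (h * x * h⁻¹) * g⁻¹ by group]
    exact ihg (ihh hx)

theorem setOf_pow_mul_eq_image_Iio (a c : G) (ha : 0 < orderOf a) :
    {x | ∃ j : ℕ, j ≤ orderOf a - 1 ∧ x = a ^ j * c} =
      (fun j => a ^ j * c) '' Set.Iio (orderOf a) := by
  ext x
  constructor
  · rintro ⟨j, hj, rfl⟩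
    exact ⟨j, by rw [Set.mem_Iio]; omega, rfl⟩
  · rintro ⟨j, hj, rfl⟩
    exact ⟨j, by rw [Set.mem_Iio] at hj; omega, rfl⟩

theorem setOf_pow_mul_eq_setOf_zpow_mul (a c : G) (ha : 0 < orderOf a) :
    {x | ∃ j : ℕ, j ≤ orderOf a - 1 ∧ x = a ^ j * c} = {x | ∃ k : ℤ, x = a ^ k * c} := by
  ext x
  constructor
  · rintro ⟨j, -, rfl⟩
    exact ⟨j, by rw [zpow_natCast]⟩
  · rintro ⟨k, rfl⟩
    have hmod_nonneg : 0 ≤ k % orderOf a := Int.emod_nonneg k (by omega)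
    have hmod_lt : k % orderOf a < orderOf a := Int.emod_lt_of_pos k (by omega)
    refine ⟨(k % orderOf a).toNat, by omega, ?_⟩
    rw [← zpow_natCast, Int.toNat_of_nonneg hmod_nonneg, zpow_mod_orderOf]

theorem card_setOf_pow_mul (a c : G) (ha : 0 < orderOf a) :
    Nat.card {x | ∃ j : ℕ, j ≤ orderOf a - 1 ∧ x = a ^ j * c} = orderOf a := by
  have hinj : Set.InjOn (fun j => a ^ j * c) (Set.Iio (orderOf a)) :=
    fun i hi j hj h => pow_injOn_Iio_orderOf hi hj (mul_right_cancel h)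
  rw [setOf_pow_mul_eq_image_Iio a c ha, Nat.card_coe_set_eq, hinj.ncard_image,
    Set.ncard_Iio_nat]

section Metacyclic

variable {a b : G} {r : ℕ}

theorem conj_pow_eq_pow_pow (hrel : b * a * b⁻¹ = a ^ r) (m : ℕ) :
    b ^ m * a * (b ^ m)⁻¹ = a ^ r ^ m := by
  induction m with
  | zero => simp
  | succ m ih =>
    calc b ^ (m + 1) * a * (b ^ (m + 1))⁻¹ = b * (b ^ m * a * (b ^ m)⁻¹) * b⁻¹ := by group
      _ = (b * a * b⁻¹) ^ r ^ m := by rw [ih, conj_pow]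
      _ = a ^ r ^ (m + 1) := by rw [hrel, ← pow_mul, pow_succ']

theorem zpow_conj_pow_eq (hrel : b * a * b⁻¹ = a ^ r) (n : ℕ) (k : ℤ) :
    a ^ k * b ^ n * (a ^ k)⁻¹ = a ^ (k * (1 - (r : ℤ) ^ n)) * b ^ n := by
  calc a ^ k * b ^ n * (a ^ k)⁻¹ = a ^ k * (b ^ n * a * (b ^ n)⁻¹) ^ (-k) * b ^ n := by
        rw [conj_zpow]; group
    _ = a ^ (k * (1 - (r : ℤ) ^ n)) * b ^ n := by
        rw [conj_pow_eq_pow_pow hrel, ← zpow_natCast, ← zpow_mul, ← zpow_add]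
        push_cast; ring_nf

theorem conj_zpow_mul_pow (hrel : b * a * b⁻¹ = a ^ r) (n : ℕ) (k : ℤ) :
    b * (a ^ k * b ^ n) * b⁻¹ = a ^ (k * r) * b ^ n := by
  calc b * (a ^ k * b ^ n) * b⁻¹ = (b * a * b⁻¹) ^ k * b ^ n := by
        rw [conj_zpow]; group
    _ = a ^ (k * r) * b ^ n := by rw [hrel, ← zpow_natCast, ← zpow_mul, mul_comm]

theorem isConj_pow_zpow_mul (hp : (orderOf a).Prime) (hrel : b * a * b⁻¹ = a ^ r) {n : ℕ}
    (hrn : (r : ZMod (orderOf a)) ^ n ≠ 1) (j : ℤ) : IsConj (b ^ n) (a ^ j * b ^ n) := by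
  have := Fact.mk hp
  have hunit : ((1 - (r : ℤ) ^ n : ℤ) : ZMod (orderOf a)) ≠ 0 := by
    push_cast
    exact sub_ne_zero.mpr hrn.symm
  set k : ℤ := ZMod.cast ((j : ZMod (orderOf a)) * ((1 - (r : ℤ) ^ n : ℤ) : ZMod (orderOf a))⁻¹)
  refine isConj_iff.mpr ⟨a ^ k, ?_⟩
  rw [zpow_conj_pow_eq hrel, mul_left_inj, zpow_eq_zpow_iff_modEq,
    ← ZMod.intCast_eq_intCast_iff, Int.cast_mul, ZMod.intCast_cast, ZMod.cast_id', id, inv_mul_cancel_right₀ hunit]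

theorem exists_zpow_mul_eq_of_isConj_pow [Finite G] (hrel : b * a * b⁻¹ = a ^ r)
    (hgen : Subgroup.closure {a, b} = ⊤) {n : ℕ} {x : G} (hx : IsConj (b ^ n) x) :
    ∃ k : ℤ, x = a ^ k * b ^ n := by
  refine mem_of_isConj_of_generators_conj_mem (T := {x | ∃ k : ℤ, x = a ^ k * b ^ n}) hgen ?_
    ⟨0, by simp⟩ hx
  rintro g (rfl | rfl) _ ⟨k, rfl⟩
  · refine ⟨k + (1 - (r : ℤ) ^ n), ?_⟩
    calc g * (g ^ k * b ^ n) * g⁻¹ = g ^ k * (g ^ (1 : ℤ) * b ^ n * (g ^ (1 : ℤ))⁻¹) := by group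
      _ = g ^ (k + (1 - (r : ℤ) ^ n)) * b ^ n := by
        rw [zpow_conj_pow_eq hrel, one_mul, ← mul_assoc, ← zpow_add]
  · exact ⟨k * r, conj_zpow_mul_pow hrel n k⟩

end Metacyclic

end

theorem stmt10_general {G : Type*} [Group G] [Fintype G]
    (p q : ℕ) (hp : p.Prime)
    (r : ℕ) (hr : orderOf (r : ZMod p) = q)
    (a b : G)
    (ha : orderOf a = p)
    (hrel : b * a * b⁻¹ = a ^ r)
    (hgen : Subgroup.closure {a, b} = (⊤ : Subgroup G))
    (n : ℕ) (hn1 : 1 ≤ n) (hn2 : n ≤ q - 1) :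
    {x : G | ∃ j : ℕ, j ≤ p - 1 ∧ x = a ^ j * b ^ n} = {x : G | IsConj (b ^ n) x} ∧
      Nat.card {x : G | ∃ j : ℕ, j ≤ p - 1 ∧ x = a ^ j * b ^ n} = p := by
  subst ha
  have hrn : (r : ZMod (orderOf a)) ^ n ≠ 1 :=
    pow_ne_one_of_lt_orderOf (by omega) (by omega)
  refine ⟨?_, card_setOf_pow_mul a _ hp.pos⟩
  rw [setOf_pow_mul_eq_setOf_zpow_mul a _ hp.pos]
  ext x
  constructor
  · rintro ⟨k, rfl⟩
    exact isConj_pow_zpow_mul hp hrel hrn k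
  · exact exists_zpow_mul_eq_of_isConj_pow hrel hgen

/-- Let `p, q` be primes with `p ≡ 1 (mod q)`, and let
`G = ⟨a, b | aᵖ = bᵠ = 1, b a b⁻¹ = aʳ⟩` be the nonabelian group of order `pq`, where `r`
has multiplicative order `q` modulo `p`.  Then for every integer `n` with `1 ≤ n ≤ q−1`, the
set `C = {aʲ bⁿ : 0 ≤ j ≤ p−1}` is a conjugacy class in `G` (namely the class of `bⁿ`) of
size `p`. -/
theorem stmt10 {G : Type*} [Group G] [Fintype G]
    (p q : ℕ) (hp : p.Prime) (hq : q.Prime) (hpq : p % q = 1)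
    (r : ℕ) (hr : orderOf (r : ZMod p) = q)
    (a b : G) (hcard : Nat.card G = p * q)
    (ha : orderOf a = p) (hb : orderOf b = q)
    (hrel : b * a * b⁻¹ = a ^ r)
    (hgen : Subgroup.closure {a, b} = (⊤ : Subgroup G))
    (n : ℕ) (hn1 : 1 ≤ n) (hn2 : n ≤ q - 1) :
    {x : G | ∃ j : ℕ, j ≤ p - 1 ∧ x = a ^ j * b ^ n} = {x : G | IsConj (b ^ n) x} ∧
      Nat.card {x : G | ∃ j : ℕ, j ≤ p - 1 ∧ x = a ^ j * b ^ n} = p :=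
  stmt10_general p q hp r hr a b ha hrel hgen n hn1 hn2
end

section
/- Let K be a number field of degree n_K over ℚ, and let 𝔞 be a nonzero ideal of its ring of integers O_K. Let ω(𝔞) denote the number of distinct prime ideals dividing 𝔞. Then for every δ > 0, ω(𝔞) ≤ e^{1+1/δ} · n_K + δ · log N(𝔞), where N(𝔞) = |O_K/𝔞| is the absolute norm. -/
/-!
Split the primes `𝔭 ⊇ 𝔞` at norm `y = e^{1/δ}`. Distinct primes containing `𝔞` divide it, so
their norms multiply to a divisor of `N(𝔞)`; hence at most `δ log N(𝔞)` of them have norm `≥ y`.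
A prime of norm `< y` lies above its residue characteristic `p < y`, and at most `n_K` primes lie
above `p` since `N(p O_K) = p^{n_K}`; so there are at most `n_K ⌈y⌉ ≤ e^{1+1/δ} n_K` of them.
-/

open NumberField

open Finset

namespace Ideal

theorem ringChar_quotient_mem {R : Type*} [CommRing R] (I : Ideal R) :
    (ringChar (R ⧸ I) : R) ∈ I :=
  Quotient.eq_zero_iff_mem.mp (by rw [map_natCast]; exact ringChar.Nat.cast_ringChar)

variable {S : Type*} [CommRing S] [IsDedekindDomain S] [Module.Free ℤ S]

theorem prod_absNorm_dvd_absNorm {I : Ideal S} {T : Finset (Ideal S)}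
    (hT : ∀ 𝔭 ∈ T, 𝔭.IsPrime ∧ I ≤ 𝔭) : ∏ 𝔭 ∈ T, absNorm 𝔭 ∣ absNorm I := by
  rcases eq_or_ne I ⊥ with rfl | hI
  · simp
  rw [← map_prod]
  refine absNorm_dvd_absNorm_of_le (le_of_dvd (prod_primes_dvd I (fun 𝔭 h𝔭 ↦ ?_)
    (fun 𝔭 h𝔭 ↦ dvd_iff_le.mpr (hT 𝔭 h𝔭).2)))
  exact prime_of_isPrime (ne_bot_of_le_ne_bot hI (hT 𝔭 h𝔭).2) (hT 𝔭 h𝔭).1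

theorem pow_card_le_absNorm [Module.Finite ℤ S] {I : Ideal S} (hI : I ≠ ⊥)
    {T : Finset (Ideal S)} (hT : ∀ 𝔭 ∈ T, 𝔭.IsPrime ∧ I ≤ 𝔭) {m : ℕ} (hm : ∀ 𝔭 ∈ T, m ≤ absNorm 𝔭) :
    m ^ #T ≤ absNorm I :=
  calc m ^ #T = ∏ _𝔭 ∈ T, m := (prod_const m).symm
    _ ≤ ∏ 𝔭 ∈ T, absNorm 𝔭 := prod_le_prod' hm
    _ ≤ absNorm I := Nat.le_of_dvd (Nat.pos_of_ne_zero (absNorm_eq_zero_iff.not.mpr hI))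
        (prod_absNorm_dvd_absNorm hT)

theorem le_absNorm_of_natCast_mem [Module.Finite ℤ S] {p : ℕ} (hp : p.Prime) {𝔭 : Ideal S}
    [𝔭.IsPrime] (h : (p : S) ∈ 𝔭) : p ≤ absNorm 𝔭 := by
  have hdvd : absNorm 𝔭 ∣ p ^ Module.finrank ℤ S := by
    rw [← absNorm_span_natCast]
    exact absNorm_dvd_absNorm_of_le ((span_singleton_le_iff_mem _).mpr h)
  obtain ⟨k, -, hk⟩ := (Nat.dvd_prime_pow hp).mp hdvd
  have hk0 : k ≠ 0 := by
    rintro rfl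
    exact IsPrime.ne_top ‹_› (absNorm_eq_one_iff.mp (by simpa using hk))
  exact hk ▸ Nat.le_self_pow hk0 p

theorem card_le_finrank_of_natCast_mem [Module.Finite ℤ S] {p : ℕ} (hp : p.Prime)
    {T : Finset (Ideal S)} (hT : ∀ 𝔭 ∈ T, 𝔭.IsPrime ∧ (p : S) ∈ 𝔭) : #T ≤ Module.finrank ℤ S := by
  have hspan : span {(p : S)} ≠ ⊥ := fun h ↦
    pow_ne_zero _ hp.ne_zero (by simpa [h] using (absNorm_span_natCast (S := S) p).symm)
  have := pow_card_le_absNorm hspan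
    (fun 𝔭 h𝔭 ↦ ⟨(hT 𝔭 h𝔭).1, (span_singleton_le_iff_mem _).mpr (hT 𝔭 h𝔭).2⟩)
    (fun 𝔭 h𝔭 ↦ have := (hT 𝔭 h𝔭).1; le_absNorm_of_natCast_mem hp (hT 𝔭 h𝔭).2)
  rw [absNorm_span_natCast] at this
  exact (Nat.pow_le_pow_iff_right hp.one_lt).mp this

theorem prime_ringChar_quotient [Module.Finite ℤ S] {𝔭 : Ideal S} [𝔭.IsPrime] (h𝔭 : 𝔭 ≠ ⊥) :
    (ringChar (S ⧸ 𝔭)).Prime := by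
  have : Finite (S ⧸ 𝔭) := (absNorm_ne_zero_iff 𝔭).mp (absNorm_eq_zero_iff.not.mpr h𝔭)
  exact CharP.prime_ringChar _

theorem card_filter_absNorm_lt_le [Module.Finite ℤ S] {T : Finset (Ideal S)}
    (hT : ∀ 𝔭 ∈ T, 𝔭.IsPrime ∧ 𝔭 ≠ ⊥) (m : ℕ) :
    #{𝔭 ∈ T | absNorm 𝔭 < m} ≤ Module.finrank ℤ S * m := by
  classical
  set A := {𝔭 ∈ T | absNorm 𝔭 < m}
  have hA : ∀ 𝔭 ∈ A, 𝔭.IsPrime ∧ 𝔭 ≠ ⊥ ∧ absNorm 𝔭 < m := fun 𝔭 h𝔭 ↦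
    have h𝔭 := mem_filter.mp h𝔭; ⟨(hT 𝔭 h𝔭.1).1, (hT 𝔭 h𝔭.1).2, h𝔭.2⟩
  refine (card_le_mul_card_image (f := fun 𝔭 ↦ ringChar (S ⧸ 𝔭)) A _ fun p hp ↦ ?_).trans
    (Nat.mul_le_mul_left _ ?_)
  · obtain ⟨𝔭, h𝔭, rfl⟩ := mem_image.mp hp
    have := (hA 𝔭 h𝔭).1
    refine card_le_finrank_of_natCast_mem (prime_ringChar_quotient (hA 𝔭 h𝔭).2.1) fun 𝔮 h𝔮 ↦ ?_
    obtain ⟨h𝔮A, h𝔮p⟩ := mem_filter.mp h𝔮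
    exact ⟨(hA 𝔮 h𝔮A).1, h𝔮p ▸ ringChar_quotient_mem 𝔮⟩
  · refine (card_le_card fun p hp ↦ ?_).trans (card_range m).le
    obtain ⟨𝔭, h𝔭, rfl⟩ := mem_image.mp hp
    obtain ⟨_, h𝔭0, h𝔭m⟩ := hA 𝔭 h𝔭
    exact mem_range.mpr ((le_absNorm_of_natCast_mem (prime_ringChar_quotient h𝔭0)
      (ringChar_quotient_mem 𝔭)).trans_lt h𝔭m)

open Real in
theorem card_le_exp_mul_finrank_add_mul_log [Module.Finite ℤ S] {I : Ideal S} (hI : I ≠ ⊥)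
    {T : Finset (Ideal S)} (hT : ∀ 𝔭 ∈ T, 𝔭.IsPrime ∧ I ≤ 𝔭) {δ : ℝ} (hδ : 0 < δ) :
    (#T : ℝ) ≤ exp (1 + 1 / δ) * Module.finrank ℤ S + δ * log (absNorm I) := by
  classical
  set y := exp (1 / δ)
  set m := ⌈y⌉₊
  have hy : 1 ≤ y := one_le_exp (by positivity)
  have hm : (m : ℝ) ≤ exp (1 + 1 / δ) := by
    have : 2 ≤ exp 1 := by linarith [add_one_le_exp 1]
    rw [exp_add]
    nlinarith [Nat.ceil_lt_add_one (zero_le_one.trans hy)]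
  have hsmall : (#{𝔭 ∈ T | absNorm 𝔭 < m} : ℝ) ≤ exp (1 + 1 / δ) * Module.finrank ℤ S := by
    have := card_filter_absNorm_lt_le
      (fun 𝔭 h𝔭 ↦ ⟨(hT 𝔭 h𝔭).1, ne_bot_of_le_ne_bot hI (hT 𝔭 h𝔭).2⟩) m
    rw [mul_comm]
    exact (Nat.cast_le.mpr this).trans (by push_cast; gcongr)
  have hlarge : (#{𝔭 ∈ T | ¬absNorm 𝔭 < m} : ℝ) ≤ δ * log (absNorm I) := by
    set B := {𝔭 ∈ T | ¬absNorm 𝔭 < m}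
    have hpow : m ^ #B ≤ absNorm I := pow_card_le_absNorm hI
      (fun 𝔭 h𝔭 ↦ hT 𝔭 (mem_filter.mp h𝔭).1) (fun 𝔭 h𝔭 ↦ not_lt.mp (mem_filter.mp h𝔭).2)
    have : y ^ #B ≤ absNorm I :=
      calc _ ≤ (m : ℝ) ^ #B := by gcongr; exact Nat.le_ceil y
        _ ≤ absNorm I := by exact_mod_cast hpow
    have hlog := log_le_log (by positivity) this
    rw [log_pow, log_exp] at hlog
    calc (#B : ℝ) = δ * (#B * (1 / δ)) := by field_simp
      _ ≤ δ * log (absNorm I) := by gcongr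
  rw [← card_filter_add_card_filter_not (fun 𝔭 ↦ absNorm 𝔭 < m), Nat.cast_add]
  exact add_le_add hsmall hlarge

end Ideal

/-- Let `K` be a number field of degree `n_K` over `ℚ` and let `𝔞` be a
nonzero ideal of its ring of integers `O_K`.  Let `ω(𝔞)` denote the number of distinct prime
ideals dividing `𝔞` (equivalently, the prime ideals containing `𝔞`).  Then for every `δ > 0`,
`ω(𝔞) ≤ e^{1+1/δ} · n_K + δ · log N(𝔞)`, where `N(𝔞) = |O_K/𝔞|` is the absolute norm. -/
theorem stmt14 (K : Type*) [Field K] [NumberField K]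
    (𝔞 : Ideal (𝓞 K)) (h𝔞 : 𝔞 ≠ 0) (δ : ℝ) (hδ : 0 < δ) :
    (Nat.card {𝔭 : Ideal (𝓞 K) | 𝔭.IsPrime ∧ 𝔞 ≤ 𝔭} : ℝ) ≤
      Real.exp (1 + 1 / δ) * (Module.finrank ℚ K) + δ * Real.log (Ideal.absNorm 𝔞) := by
  have hfin : {𝔭 : Ideal (𝓞 K) | 𝔭.IsPrime ∧ 𝔞 ≤ 𝔭}.Finite :=
    (Ideal.finite_setOfPred_absNorm_le (Ideal.absNorm 𝔞)).subset fun 𝔭 h𝔭 ↦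
      Nat.le_of_dvd
        (Ideal.absNorm_pos_iff_mem_nonZeroDivisors.mpr (mem_nonZeroDivisors_of_ne_zero h𝔞))
        (Ideal.absNorm_dvd_absNorm_of_le h𝔭.2)
  rw [Nat.card_coe_set_eq, Set.ncard_eq_toFinset_card _ hfin, ← RingOfIntegers.rank]
  exact Ideal.card_le_exp_mul_finrank_add_mul_log h𝔞 (fun 𝔭 h𝔭 ↦ hfin.mem_toFinset.mp h𝔭) hδ
end
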